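/- arXiv:0810.3354 — 4 statements merged into one kernel-verified Lean document; each statement's English description precedes it below -/
import Mathlib

section
/- Let g ≥ 1 and let L be the free Lie algebra over ℚ on 2g generators e_1, …, e_{2g}. For every n ≥ 2, the images of the left-normed Lie monomials w(i_1,…,i_n) = [[⋯[[e_{i_1},e_{i_2}],e_{i_3}],⋯],e_{i_n}], taken over all admissible tuples (i_1,…,i_n) (i.e. tuples of indices in {1,…,2g} with i_1 < i_2 ≥ i_3 ≥ ⋯ ≥ i_n), are ℚ-linearly independent in the quotient vector space L/(L^{n+1} + I), where L^{n+1} is the (n+1)-st term of the lower central series of L and I = [[L,L],[L,L]]. -/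
/-- The left-normed iterated bracket `[[⋯[x, e_{i_1}], ⋯], e_{i_m}]` obtained by
successively bracketing `x` with the generators indexed by the list. -/
noncomputable def leftNormedBracket {g : ℕ} :
    FreeLieAlgebra ℚ (Fin (2 * g)) → List (Fin (2 * g)) → FreeLieAlgebra ℚ (Fin (2 * g))
  | x, [] => x
  | x, i :: t => leftNormedBracket ⁅x, FreeLieAlgebra.of ℚ i⁆ t

/-- An admissible tuple `(i_1, i_2, …, i_n)` of indices in `Fin (2g)`:
`i_1 < i_2 ≥ i_3 ≥ ⋯ ≥ i_n`.  The entries `i_3, …, i_n` are recorded by the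
function `rest : Fin (n-2) → Fin (2g)`. -/
structure AdmissibleTuple (g n : ℕ) where
  i1 : Fin (2 * g)
  i2 : Fin (2 * g)
  rest : Fin (n - 2) → Fin (2 * g)
  lt : i1 < i2
  le : ∀ k, rest k ≤ i2
  anti : Antitone rest

/-- The left-normed Lie monomial `w(i_1,…,i_n) = [[⋯[[e_{i_1},e_{i_2}],e_{i_3}],⋯],e_{i_n}]`
attached to an admissible tuple. -/
noncomputable def wMonomial {g n : ℕ} (t : AdmissibleTuple g n) : FreeLieAlgebra ℚ (Fin (2 * g)) :=
  leftNormedBracket ⁅FreeLieAlgebra.of ℚ t.i1, FreeLieAlgebra.of ℚ t.i2⁆ (List.ofFn t.rest)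

/-!
Send the free Lie algebra to the semidirect sum `S^σ ⋊ R^σ`, `S = R[Xᵢ | i ∈ σ]`, by
`eᵢ ↦ (εᵢ, εᵢ)`, where `v ∈ R^σ` acts on `S^σ` through multiplication by the linear form
`-∑ vᵢ Xᵢ`. The target is metabelian, so `I` dies, and `L^{n+1}` lands in tuples of polynomials
of degree `≥ n`. The monomial `w(i₁, …, iₙ)` goes to
`X_{i₃} ⋯ X_{iₙ} (X_{i₂} ε_{i₁} - X_{i₁} ε_{i₂})`, so the coefficient of `X_{i₂} ⋯ X_{iₙ}` in
coordinate `i₁` is a functional that is `1` on `w(i₁, …, iₙ)` and `0` on all other admissible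
monomials: an admissible tuple is determined by `i₁` and the multiset `{i₂, …, iₙ}` since
`i₂ ≥ i₃ ≥ ⋯`, and the cross term `X_{i₁} X_{i₃} ⋯ X_{iₙ}` only involves variables `≤ i₂`.
-/

open MvPolynomial LieAlgebra

attribute [local instance] LieRing.ofAssociativeRing LieAlgebra.ofAssociativeAlgebra

namespace MetabelianModel

variable {R σ : Type*} [CommRing R]

noncomputable def mulDerivation (p : MvPolynomial σ R) :
    LieDerivation R (σ → MvPolynomial σ R) (σ → MvPolynomial σ R) where
  toLinearMap := p • LinearMap.id
  leibniz' a b := by simp [Ring.lie_def, mul_comm]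

variable [Fintype σ]

variable (R σ) in
noncomputable def linearPoly : (σ → R) →ₗ[R] MvPolynomial σ R := Fintype.linearCombination R X

lemma linearPoly_mem_idealOfVars (v : σ → R) : linearPoly R σ v ∈ idealOfVars σ R :=
  Submodule.sum_mem _ fun i _ => Submodule.smul_of_tower_mem _ _ (Ideal.subset_span ⟨i, rfl⟩)

lemma linearPoly_single [DecidableEq σ] (i : σ) : linearPoly R σ (Pi.single i 1) = X i := by
  simp [linearPoly, Fintype.linearCombination_apply_single]

/-- The sign makes `⁅w, eᵢ⁆ = Xᵢ • w`, so that left-normed brackets carry no signs. -/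
noncomputable def action :
    (σ → R) →ₗ⁅R⁆ LieDerivation R (σ → MvPolynomial σ R) (σ → MvPolynomial σ R) where
  toFun v := mulDerivation (-linearPoly R σ v)
  map_add' v w := by ext a i : 2; simp [mulDerivation, add_mul, add_comm]
  map_smul' c v := by ext a i : 2; simp [mulDerivation]
  map_lie' {v w} := by ext a i : 2; simp [mulDerivation, Ring.lie_def, mul_comm v w]; ring

variable (R σ) in
abbrev Model := (σ → MvPolynomial σ R) ⋊⁅action (R := R) (σ := σ)⁆ (σ → R)

lemma lie_def (x y : Model R σ) :
    ⁅x, y⁆ = ⟨linearPoly R σ y.right • x.left - linearPoly R σ x.right • y.left, 0⟩ := by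
  ext : 1
  · simp [Ring.lie_def, action, mulDerivation, mul_comm, neg_add_eq_sub]
  · simp [Ring.lie_def, mul_comm]

lemma lie_right (x y : Model R σ) : ⁅x, y⁆.right = 0 := by
  rw [lie_def]

lemma derivedSeries_two_eq_bot : derivedSeries R (Model R σ) 2 = ⊥ := by
  have h1 : derivedSeries R (Model R σ) 1 ≤ (SemiDirectSum.projr action).ker := by
    rw [derivedSeries_def, derivedSeriesOfIdeal_succ, LieSubmodule.lie_le_iff]
    exact fun x _ y _ => lie_right x y
  rw [eq_bot_iff, derivedSeries_def, derivedSeriesOfIdeal_succ, LieSubmodule.lie_le_iff]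
  intro x hx y hy
  have hx0 : x.right = 0 := h1 hx
  have hy0 : y.right = 0 := h1 hy
  rw [lie_def, hx0, hy0]
  simp

lemma lie_left_mem_pow {k : ℕ} (x y : Model R σ) (hl : ∀ j, y.left j ∈ idealOfVars σ R ^ k)
    (hr : linearPoly R σ y.right ∈ idealOfVars σ R ^ (k + 1)) (j : σ) :
    ⁅x, y⁆.left j ∈ idealOfVars σ R ^ (k + 1) := by
  rw [lie_def]
  refine Ideal.sub_mem _ (Ideal.mul_mem_right _ _ hr) ?_
  rw [pow_succ']
  exact Ideal.mul_mem_mul (linearPoly_mem_idealOfVars _) (hl j)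

/-- The elements of degree `≥ k + 1` for the grading in which the `Xᵢ` and the basis vectors of
`σ → R` and of `σ → S` have degree one, so that `f • εⱼ` has degree `1 + deg f`. -/
noncomputable def degreeFiltration (k : ℕ) : LieIdeal R (Model R σ) where
  carrier := {x | (∀ j, x.left j ∈ idealOfVars σ R ^ k) ∧
    linearPoly R σ x.right ∈ idealOfVars σ R ^ (k + 1)}
  add_mem' hx hy :=
    ⟨fun j => Ideal.add_mem _ (hx.1 j) (hy.1 j), by simpa using Ideal.add_mem _ hx.2 hy.2⟩
  zero_mem' := ⟨fun _ => Ideal.zero_mem _, by simp⟩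
  smul_mem' c x hx := ⟨fun j => by simpa using Submodule.smul_of_tower_mem _ c (hx.1 j),
    by simpa using Submodule.smul_of_tower_mem _ c hx.2⟩
  lie_mem {x y} hy :=
    ⟨fun j => Ideal.pow_le_pow_right k.le_succ (lie_left_mem_pow x y hy.1 hy.2 j),
      by rw [lie_right, map_zero]; exact zero_mem _⟩

lemma lie_mem_degreeFiltration_succ {k : ℕ} (x : Model R σ) {y : Model R σ}
    (hy : y ∈ degreeFiltration k) : ⁅x, y⁆ ∈ degreeFiltration (k + 1) :=
  ⟨lie_left_mem_pow x y hy.1 hy.2, by rw [lie_right, map_zero]; exact zero_mem _⟩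

lemma lowerCentralSeries_le_degreeFiltration (k : ℕ) :
    LieModule.lowerCentralSeries R (Model R σ) (Model R σ) k ≤ degreeFiltration k := by
  induction k with
  | zero => exact fun x _ => ⟨fun j => by simp, by simpa using linearPoly_mem_idealOfVars _⟩
  | succ k ih =>
    rw [LieModule.lowerCentralSeries_succ, LieSubmodule.lie_le_iff]
    exact fun x _ y hy => lie_mem_degreeFiltration_succ x (ih hy)

variable (R σ) in
noncomputable def leftCoeff (j : σ) (d : σ →₀ ℕ) : Model R σ →ₗ[R] R :=
  lcoeff R d ∘ₗ LinearMap.proj j ∘ₗ SemiDirectSum.projl action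

lemma leftCoeff_apply (j : σ) (d : σ →₀ ℕ) (x : Model R σ) :
    leftCoeff R σ j d x = coeff d (x.left j) :=
  rfl

lemma leftCoeff_eq_zero_of_mem_degreeFiltration {k : ℕ} {x : Model R σ}
    (hx : x ∈ degreeFiltration k) (j : σ) {d : σ →₀ ℕ} (hd : d.degree < k) :
    leftCoeff R σ j d x = 0 :=
  (mem_pow_idealOfVars_iff' k _).1 (hx.1 j) d hd

variable [DecidableEq σ]

variable (R) in
noncomputable def gen (i : σ) : Model R σ := ⟨Pi.single i 1, Pi.single i 1⟩

lemma lie_gen_gen (a b : σ) :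
    ⁅gen R a, gen R b⁆ = ⟨X b • Pi.single a 1 - X a • Pi.single b 1, 0⟩ := by
  rw [lie_def]
  simp [gen, linearPoly_single]

lemma lie_gen (w : σ → MvPolynomial σ R) (i : σ) :
    ⁅(⟨w, 0⟩ : Model R σ), gen R i⁆ = ⟨(X i : MvPolynomial σ R) • w, 0⟩ := by
  rw [lie_def]
  simp [gen, linearPoly_single]

variable (R σ) in
noncomputable def toModel : FreeLieAlgebra R σ →ₗ⁅R⁆ Model R σ := FreeLieAlgebra.lift R (gen R)

lemma toModel_of (i : σ) : toModel R σ (FreeLieAlgebra.of R i) = gen R i :=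
  FreeLieAlgebra.lift_of_apply _ _

lemma lowerCentralSeries_sup_derivedSeries_le_ker {k : ℕ} (j : σ) {d : σ →₀ ℕ}
    (hd : d.degree < k) :
    (LieModule.lowerCentralSeries R (FreeLieAlgebra R σ) (FreeLieAlgebra R σ) k ⊔
        derivedSeries R (FreeLieAlgebra R σ) 2).toSubmodule ≤
      LinearMap.ker (leftCoeff R σ j d ∘ₗ (toModel R σ : FreeLieAlgebra R σ →ₗ[R] Model R σ)) := by
  rw [LieSubmodule.sup_toSubmodule]
  refine sup_le (fun x hx => ?_) (fun x hx => ?_)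
  · have := LieIdeal.map_lowerCentralSeries_le k (LieIdeal.mem_map (f := toModel R σ) hx)
    exact leftCoeff_eq_zero_of_mem_degreeFiltration
      (lowerCentralSeries_le_degreeFiltration k this) j hd
  · have := LieIdeal.derivedSeries_map_le (f := toModel R σ) 2 (LieIdeal.mem_map hx)
    rw [derivedSeries_two_eq_bot, LieSubmodule.mem_bot] at this
    rw [LinearMap.mem_ker, LinearMap.comp_apply, LieHom.coe_toLinearMap, this, map_zero]

end MetabelianModel

section Monomials

variable {R σ : Type*} [CommRing R] [DecidableEq σ]

lemma Multiset.degree_toFinsupp (s : Multiset σ) : (Multiset.toFinsupp s).degree = card s :=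
  Multiset.toFinsupp_sum_eq s

lemma MvPolynomial.prod_map_X (l : List σ) :
    (l.map X).prod = monomial (Multiset.toFinsupp (l : Multiset σ)) (1 : R) := by
  induction l with
  | nil => simp
  | cons i l ih =>
    rw [List.map_cons, List.prod_cons, ih, ← Multiset.cons_coe, ← Multiset.singleton_add,
      Multiset.toFinsupp_add, Multiset.toFinsupp_singleton, X, monomial_mul, one_mul]

lemma MvPolynomial.coeff_prod_map_X_self (l : List σ) :
    coeff (Multiset.toFinsupp (l : Multiset σ)) (l.map (X (R := R))).prod = 1 := by
  rw [prod_map_X, coeff_monomial, if_pos rfl]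

lemma MvPolynomial.coeff_prod_map_X_of_not_perm {l l' : List σ} (h : ¬l.Perm l') :
    coeff (Multiset.toFinsupp (l' : Multiset σ)) (l.map (X (R := R))).prod = 0 := by
  rw [prod_map_X, coeff_monomial, if_neg]
  rwa [Multiset.toFinsupp.injective.eq_iff, Multiset.coe_eq_coe]

end Monomials

namespace AdmissibleTuple

variable {g n : ℕ}

def tail (t : AdmissibleTuple g n) : List (Fin (2 * g)) := t.i2 :: List.ofFn t.rest

lemma length_tail (hn : 2 ≤ n) (t : AdmissibleTuple g n) : t.tail.length = n - 1 := by
  simp [tail]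
  omega

lemma mem_tail_le {t : AdmissibleTuple g n} {i : Fin (2 * g)} (hi : i ∈ t.tail) : i ≤ t.i2 := by
  rcases List.mem_cons.1 hi with rfl | hi
  · exact le_rfl
  · obtain ⟨k, rfl⟩ := List.mem_ofFn.1 hi
    exact t.le k

lemma sortedGE_tail (t : AdmissibleTuple g n) : t.tail.SortedGE := by
  rw [List.sortedGE_iff_pairwise, tail, List.pairwise_cons]
  exact ⟨fun i hi => mem_tail_le (List.mem_cons_of_mem _ hi), t.anti.sortedGE_ofFn.pairwise⟩

lemma eq_of_perm_tail {s t : AdmissibleTuple g n} (h1 : s.i1 = t.i1) (h : s.tail.Perm t.tail) :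
    s = t := by
  have htail := h.eq_of_sortedGE s.sortedGE_tail t.sortedGE_tail
  obtain ⟨_, _, _, _, _, _⟩ := s
  obtain ⟨_, _, _, _, _, _⟩ := t
  simp_all [tail, List.ofFn_inj]

lemma degree_toFinsupp_tail (hn : 2 ≤ n) (t : AdmissibleTuple g n) :
    (Multiset.toFinsupp (t.tail : Multiset (Fin (2 * g)))).degree = n - 1 := by
  rw [Multiset.degree_toFinsupp, Multiset.coe_card, t.length_tail hn]

lemma not_perm_tail {s t : AdmissibleTuple g n} (h : t.i1 = s.i2) :
    ¬(s.i1 :: List.ofFn s.rest).Perm t.tail := by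
  intro hperm
  have : t.i2 ≤ s.i2 := by
    rcases List.mem_cons.1 (hperm.mem_iff.2 (List.mem_cons_self ..)) with hi | hi
    · exact hi ▸ s.lt.le
    · exact mem_tail_le (List.mem_cons_of_mem _ hi)
  exact (h ▸ t.lt).not_ge this

end AdmissibleTuple

namespace MetabelianModel

variable {g n : ℕ}

lemma toModel_leftNormedBracket (l : List (Fin (2 * g))) {x : FreeLieAlgebra ℚ (Fin (2 * g))}
    {w : Fin (2 * g) → MvPolynomial (Fin (2 * g)) ℚ} (hx : toModel ℚ _ x = ⟨w, 0⟩) :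
    toModel ℚ _ (leftNormedBracket x l) = ⟨(l.map (X (R := ℚ))).prod • w, 0⟩ := by
  induction l generalizing x w with
  | nil => simpa [leftNormedBracket] using hx
  | cons i l ih =>
    rw [leftNormedBracket, ih (by rw [LieHom.map_lie, hx, toModel_of, lie_gen]),
      List.map_cons, List.prod_cons, mul_comm (X i), mul_smul]

lemma toModel_wMonomial_left (s : AdmissibleTuple g n) (j : Fin (2 * g)) :
    (toModel ℚ _ (wMonomial s)).left j =
      (if j = s.i1 then (s.tail.map X).prod else 0) -
        (if j = s.i2 then ((s.i1 :: List.ofFn s.rest).map X).prod else 0) := by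
  rw [wMonomial, toModel_leftNormedBracket _ (by rw [LieHom.map_lie, toModel_of, toModel_of,
    lie_gen_gen])]
  simp [AdmissibleTuple.tail, Pi.single_apply, mul_sub, mul_comm]

lemma leftCoeff_toModel_wMonomial_self (t : AdmissibleTuple g n) :
    leftCoeff ℚ _ t.i1 (Multiset.toFinsupp t.tail) (toModel ℚ _ (wMonomial t)) = 1 := by
  rw [leftCoeff_apply, toModel_wMonomial_left, if_pos rfl, if_neg t.lt.ne, sub_zero,
    coeff_prod_map_X_self]

lemma leftCoeff_toModel_wMonomial_of_ne {s t : AdmissibleTuple g n} (hst : s ≠ t) :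
    leftCoeff ℚ _ t.i1 (Multiset.toFinsupp t.tail) (toModel ℚ _ (wMonomial s)) = 0 := by
  rw [leftCoeff_apply, toModel_wMonomial_left, coeff_sub]
  split_ifs with h1 h2 h2
  · exact absurd (h1.symm.trans h2) s.lt.ne
  · rw [coeff_prod_map_X_of_not_perm fun h => hst (AdmissibleTuple.eq_of_perm_tail h1.symm h),
      coeff_zero, sub_zero]
  · rw [coeff_prod_map_X_of_not_perm (AdmissibleTuple.not_perm_tail h2), coeff_zero, sub_zero]
  · rw [coeff_zero, sub_zero]

end MetabelianModel

theorem admissible_monomials_linearIndependent_general (g n : ℕ) (hn : 2 ≤ n) :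
    LinearIndependent ℚ
      (fun t : AdmissibleTuple g n =>
        (Submodule.Quotient.mk (wMonomial t) :
          FreeLieAlgebra ℚ (Fin (2 * g)) ⧸
            (LieModule.lowerCentralSeries ℚ (FreeLieAlgebra ℚ (Fin (2 * g)))
                (FreeLieAlgebra ℚ (Fin (2 * g))) n ⊔
              LieAlgebra.derivedSeries ℚ (FreeLieAlgebra ℚ (Fin (2 * g))) 2).toSubmodule)) := by
  have hdeg (t : AdmissibleTuple g n) :
      (Multiset.toFinsupp (t.tail : Multiset (Fin (2 * g)))).degree < n := by
    rw [t.degree_toFinsupp_tail hn]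
    omega
  refine .of_pairwise_dual_eq_zero_one _ (fun t => Submodule.liftQ _ _
      (MetabelianModel.lowerCentralSeries_sup_derivedSeries_le_ker t.i1 (hdeg t)))
    (fun t s hts => ?_) (fun t => ?_)
  · exact MetabelianModel.leftCoeff_toModel_wMonomial_of_ne (Ne.symm hts)
  · exact MetabelianModel.leftCoeff_toModel_wMonomial_self t

/-- Lemma 2.1: the admissible left-normed Lie monomials of degree `n` are linearly
independent in `L/(L^{n+1} + I)`, where `L` is the free Lie algebra on `2g` generators,
`L^{n+1}` is the `(n+1)`-st term of the lower central series (`lowerCentralSeries … n`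
in Mathlib's indexing, which starts at `0`) and `I = [[L,L],[L,L]]` is the second
derived ideal. -/
theorem admissible_monomials_linearIndependent (g n : ℕ) (hg : 1 ≤ g) (hn : 2 ≤ n) :
    LinearIndependent ℚ
      (fun t : AdmissibleTuple g n =>
        (Submodule.Quotient.mk (wMonomial t) :
          FreeLieAlgebra ℚ (Fin (2 * g)) ⧸
            (LieModule.lowerCentralSeries ℚ (FreeLieAlgebra ℚ (Fin (2 * g)))
                (FreeLieAlgebra ℚ (Fin (2 * g))) n ⊔
              LieAlgebra.derivedSeries ℚ (FreeLieAlgebra ℚ (Fin (2 * g))) 2).toSubmodule)) :=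
  admissible_monomials_linearIndependent_general g n hn
end

section
/- Let M be a Lie algebra over ℚ that is generated as a Lie algebra by finitely many elements x_1, …, x_r and satisfies [[M,M],[M,M]] = 0, and let ω ∈ [M,M]. Then the Lie ideal of M generated by ω equals the ℚ-linear span of the elements ad(x_{j_{m}}) ∘ ⋯ ∘ ad(x_{j_1})(ω) taken over all m ≥ 0 and all non-increasing index tuples r ≥ j_1 ≥ j_2 ≥ ⋯ ≥ j_m ≥ 1. -/
/-!
The span `S` of all iterated brackets `adIter x l ω` is stable under `ad (x j)`, hence, since the
`x j` generate, under all of `ad M`; so `S` is the Lie ideal generated by `ω`. In a metabelian Lie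
algebra, `ad a` and `ad b` commute on `[M,M]` by the Jacobi identity, as `⁅y, ⁅a, b⁆⁆ = 0` there; so
`adIter x l ω` depends only on the multiset of indices in `l`, and sorted lists suffice.
-/

/-- Iterated adjoint operators: `adIter x [j₁, …, jₘ] y = [[⋯[y, x_{j₁}], ⋯], x_{jₘ}]`,
that is, `ad(x_{jₘ}) ∘ ⋯ ∘ ad(x_{j₁})` applied to `y`, where `ad(v) = [·, v]`. -/
def adIter {M : Type*} [LieRing M] {r : ℕ} (x : Fin r → M) : List (Fin r) → M → M
  | [], y => y
  | j :: l, y => adIter x l ⁅y, x j⁆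

open LieAlgebra

lemma Submodule.lie_mem_of_lieSpan_eq_top {R L M : Type*} [CommRing R] [LieRing L]
    [LieAlgebra R L] [AddCommGroup M] [Module R M] [LieRingModule L M] [LieModule R L M]
    {s : Set L} (hs : LieSubalgebra.lieSpan R L s = ⊤) (N : Submodule R M)
    (hN : ∀ a ∈ s, ∀ m ∈ N, ⁅a, m⁆ ∈ N) (a : L) {m : M} (hm : m ∈ N) : ⁅a, m⁆ ∈ N := by
  have ha : a ∈ LieSubalgebra.lieSpan R L s := hs ▸ LieSubalgebra.mem_top a
  induction ha using LieSubalgebra.lieSpan_induction generalizing m with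
  | mem a ha => exact hN a ha m hm
  | zero => simp
  | add a b _ _ iha ihb => rw [add_lie]; exact N.add_mem (iha hm) (ihb hm)
  | smul t a _ iha => rw [smul_lie]; exact N.smul_mem t (iha hm)
  | lie a b _ _ iha ihb => rw [lie_lie]; exact N.sub_mem (iha (ihb hm)) (ihb (iha hm))

lemma lie_mem_derivedSeries_succ {R L : Type*} [CommRing R] [LieRing L] [LieAlgebra R L]
    {k : ℕ} {a b : L} (ha : a ∈ derivedSeries R L k) (hb : b ∈ derivedSeries R L k) :
    ⁅a, b⁆ ∈ derivedSeries R L (k + 1) := by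
  rw [derivedSeries_def, derivedSeriesOfIdeal_succ]
  exact LieSubmodule.lie_mem_lie ha hb

lemma lie_lie_comm_of_mem_derivedSeries_one {R L : Type*} [CommRing R] [LieRing L]
    [LieAlgebra R L] (hmet : derivedSeries R L 2 = ⊥) {y : L} (hy : y ∈ derivedSeries R L 1)
    (a b : L) : ⁅⁅y, a⁆, b⁆ = ⁅⁅y, b⁆, a⁆ := by
  have hab : ⁅a, b⁆ ∈ derivedSeries R L 1 :=
    lie_mem_derivedSeries_succ (LieSubmodule.mem_top a) (LieSubmodule.mem_top b)
  have hy_ab : ⁅y, ⁅a, b⁆⁆ = 0 := by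
    have h : ⁅y, ⁅a, b⁆⁆ ∈ derivedSeries R L 2 := lie_mem_derivedSeries_succ hy hab
    rwa [hmet, LieSubmodule.mem_bot] at h
  calc ⁅⁅y, a⁆, b⁆ = -⁅a, ⁅y, b⁆⁆ := eq_neg_of_add_eq_zero_left (hy_ab ▸ leibniz_lie y a b).symm
    _ = ⁅⁅y, b⁆, a⁆ := lie_skew _ _

section adIter

variable {L : Type*} [LieRing L] {r : ℕ} (x : Fin r → L)

lemma adIter_append_singleton (l : List (Fin r)) (j : Fin r) (y : L) :
    adIter x (l ++ [j]) y = ⁅adIter x l y, x j⁆ := by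
  induction l generalizing y with
  | nil => rfl
  | cons a l ih => exact ih _

variable {R : Type*} [CommRing R] [LieAlgebra R L]

lemma adIter_mem_lieIdeal (I : LieIdeal R L) (l : List (Fin r)) {y : L} (hy : y ∈ I) :
    adIter x l y ∈ I := by
  induction l generalizing y with
  | nil => exact hy
  | cons a l ih => exact ih (lie_mem_left R L I y (x a) hy)

lemma adIter_eq_of_perm (hmet : derivedSeries R L 2 = ⊥) {l l' : List (Fin r)} (h : l.Perm l')
    {y : L} (hy : y ∈ derivedSeries R L 1) : adIter x l y = adIter x l' y := by
  induction h generalizing y with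
  | nil => rfl
  | cons a _ ih => exact ih (lie_mem_left R L _ y (x a) hy)
  | swap a b l =>
    exact congrArg (adIter x l) (lie_lie_comm_of_mem_derivedSeries_one hmet hy (x b) (x a))
  | trans _ _ ih₁ ih₂ => exact (ih₁ hy).trans (ih₂ hy)

theorem lieSpan_singleton_eq_span_adIter (hgen : LieSubalgebra.lieSpan R L (Set.range x) = ⊤)
    (ω : L) :
    (LieSubmodule.lieSpan R L {ω}).toSubmodule = Submodule.span R (Set.range (adIter x · ω)) := by
  set S := Submodule.span R (Set.range (adIter x · ω))
  have hS : ∀ j, ∀ y ∈ S, ⁅x j, y⁆ ∈ S := by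
    intro j y hy
    refine (Submodule.map_span_le (ad R L (x j)) _ S).2 ?_ ⟨y, hy, rfl⟩
    rintro _ ⟨l, rfl⟩
    rw [ad_apply, ← lie_skew, ← adIter_append_singleton]
    exact S.neg_mem (Submodule.subset_span ⟨l ++ [j], rfl⟩)
  let I : LieIdeal R L :=
    { toSubmodule := S
      lie_mem := Submodule.lie_mem_of_lieSpan_eq_top hgen S
        (by rintro _ ⟨j, rfl⟩; exact hS j) _ }
  refine le_antisymm (?_ : LieSubmodule.lieSpan R L {ω} ≤ I) (Submodule.span_le.2 ?_)
  · exact LieSubmodule.lieSpan_le.2 (Set.singleton_subset_iff.2 (Submodule.subset_span ⟨[], rfl⟩))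
  · rintro _ ⟨l, rfl⟩
    exact adIter_mem_lieIdeal x _ l (LieSubmodule.subset_lieSpan rfl)

end adIter

/-- Let `M` be a Lie algebra over `ℚ` generated (as a Lie algebra) by `x₁, …, x_r`,
satisfying `[[M,M],[M,M]] = 0`, and let `ω ∈ [M,M]`.  Then the Lie ideal of `M`
generated by `ω` is the `ℚ`-linear span of the iterated adjoints
`ad(x_{jₘ}) ∘ ⋯ ∘ ad(x_{j₁})(ω)` over all `m ≥ 0` and all non-increasing index
tuples `j₁ ≥ j₂ ≥ ⋯ ≥ jₘ`. -/
theorem lieIdeal_span_eq_span_sorted_adIter {M : Type*} [LieRing M] [LieAlgebra ℚ M]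
    {r : ℕ} (x : Fin r → M)
    (hgen : LieSubalgebra.lieSpan ℚ M (Set.range x) = ⊤)
    (hmet : LieAlgebra.derivedSeries ℚ M 2 = ⊥)
    (ω : M) (hω : ω ∈ LieAlgebra.derivedSeries ℚ M 1) :
    (LieSubmodule.lieSpan ℚ M {ω}).toSubmodule =
      Submodule.span ℚ
        {y : M | ∃ l : List (Fin r), l.Pairwise (· ≥ ·) ∧ y = adIter x l ω} := by
  rw [lieSpan_singleton_eq_span_adIter x hgen]
  refine le_antisymm (Submodule.span_le.2 ?_) (Submodule.span_mono ?_)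
  · rintro _ ⟨l, rfl⟩
    exact Submodule.subset_span ⟨l.insertionSort (· ≥ ·), List.pairwise_insertionSort _ _,
      adIter_eq_of_perm x hmet (List.perm_insertionSort _ l).symm hω⟩
  · rintro _ ⟨l, -, rfl⟩
    exact ⟨l, rfl⟩
end

section
/- Let g ≥ 1, let m be a natural number, and let ε ∈ {0,1}. Then ∑_{i+j=m, j ≡ ε mod 2} C(i+g−1, g−1)·C(j+g−1, g−1) ≤ ∑_{i+j=m+1, j ≡ ε mod 2} C(i+g−1, g−1)·C(j+g−1, g−1), where the sums are over pairs (i,j) of natural numbers with the indicated sum and with j of parity ε, and C(a,b) denotes the binomial coefficient. -/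
open Finset

/-- The shift `(i, j) ↦ (i + 1, j)` maps the `m`-th antidiagonal into the `(m + 1)`-st. -/
theorem Finset.Nat.sum_filter_antidiagonal_le_succ {M : Type*} [AddCommMonoid M] [PartialOrder M]
    [IsOrderedAddMonoid M] [CanonicallyOrderedAdd M] (P : ℕ → Prop) [DecidablePred P]
    (f : ℕ × ℕ → M) (hf : ∀ i j, f (i, j) ≤ f (i + 1, j)) (m : ℕ) :
    ∑ p ∈ (antidiagonal m).filter (fun p => P p.2), f p ≤
      ∑ p ∈ (antidiagonal (m + 1)).filter (fun p => P p.2), f p := by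
  simp only [sum_filter]
  rw [Nat.sum_antidiagonal_succ]
  calc ∑ p ∈ antidiagonal m, (if P p.2 then f p else 0)
      ≤ ∑ p ∈ antidiagonal m, (if P p.2 then f (p.1 + 1, p.2) else 0) := by
        gcongr with p
        split_ifs
        exacts [hf p.1 p.2, le_rfl]
    _ ≤ _ := le_add_self

theorem parity_convolution_mono_general (g m ε : ℕ) :
    ∑ p ∈ (Finset.HasAntidiagonal.antidiagonal m).filter (fun p => p.2 % 2 = ε),
        Nat.choose (p.1 + g - 1) (g - 1) * Nat.choose (p.2 + g - 1) (g - 1) ≤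
      ∑ p ∈ (Finset.HasAntidiagonal.antidiagonal (m + 1)).filter (fun p => p.2 % 2 = ε),
        Nat.choose (p.1 + g - 1) (g - 1) * Nat.choose (p.2 + g - 1) (g - 1) :=
  Finset.Nat.sum_filter_antidiagonal_le_succ (fun j => j % 2 = ε) _
    (fun _ _ => Nat.mul_le_mul_right _ (Nat.choose_le_choose _ (by omega))) m

/-- For `g ≥ 1`, any `m`, and parity `ε ∈ {0,1}`, the parity-refined convolution
`∑_{i+j=m, j ≡ ε (mod 2)} C(i+g−1, g−1)·C(j+g−1, g−1)` is monotone in `m`. -/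
theorem parity_convolution_mono (g m ε : ℕ) (hg : 1 ≤ g) (hε : ε = 0 ∨ ε = 1) :
    ∑ p ∈ (Finset.HasAntidiagonal.antidiagonal m).filter (fun p => p.2 % 2 = ε),
        Nat.choose (p.1 + g - 1) (g - 1) * Nat.choose (p.2 + g - 1) (g - 1) ≤
      ∑ p ∈ (Finset.HasAntidiagonal.antidiagonal (m + 1)).filter (fun p => p.2 % 2 = ε),
        Nat.choose (p.1 + g - 1) (g - 1) * Nat.choose (p.2 + g - 1) (g - 1) :=
  parity_convolution_mono_general g m ε
end

section
/- Let g ≥ 1, let m be a natural number, and let ε ∈ {0,1}. Then 2·∑_{i+j=m, j ≡ ε mod 2} C(i+g−1, g−1)·C(j+g−1, g−1) ≤ C(m+2g, 2g−1), where the sum is over pairs (i,j) of natural numbers with i+j = m and j of parity ε, and C(a,b) denotes the binomial coefficient. -/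
/-!
With `d = g - 1`, the full convolution `∑_{i+j=m} C(i+d,d)·C(j+d,d)` is the coefficient of `X^m`
in `(1-X)^{-(d+1)}·(1-X)^{-(d+1)} = (1-X)^{-(2d+2)}`, namely `C(m+2d+1, 2d+1)`. For odd `m` the
swap `(i,j) ↦ (j,i)` carries the pairs with `j ≡ ε` into those with `j ≢ ε`, so one parity class
carries at most half of the full convolution. For even `m` pass to `m+1`: the parity-refined sum
only grows, since `(i,j) ↦ (i+1,j)` preserves the parity of `j` and the summand is monotone.
-/

open Finset PowerSeries

theorem Nat.sum_antidiagonal_add_choose_mul_add_choose (d e m : ℕ) :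
    ∑ p ∈ antidiagonal m, (p.1 + d).choose d * (p.2 + e).choose e =
      (m + (d + e + 1)).choose (d + e + 1) := by
  have h := congrArg (fun u : ℤ⟦X⟧ˣ => coeff m u.val) (invOneSubPow_add ℤ (d + 1) (e + 1))
  rw [show d + 1 + (e + 1) = d + e + 1 + 1 by ring] at h
  simp only [Units.val_mul, coeff_mul, invOneSubPow_val_succ_eq_mk_add_choose, coeff_mk] at h
  zify
  rw [add_comm m, h]
  exact sum_congr rfl fun p _ => by rw [add_comm p.1, add_comm p.2]

def parityConv (f : ℕ → ℕ) (ε m : ℕ) : ℕ :=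
  ∑ p ∈ (antidiagonal m).filter (fun p => p.2 % 2 = ε), f p.1 * f p.2

variable {f : ℕ → ℕ} {ε m : ℕ}

theorem parityConv_le_succ (hf : Monotone f) :
    parityConv f ε m ≤ parityConv f ε (m + 1) := by
  let shift : ℕ × ℕ → ℕ × ℕ := fun p => (p.1 + 1, p.2)
  have shift_injective : Function.Injective shift := fun p q h => by
    simp only [shift, Prod.mk.injEq] at h
    exact Prod.ext (by omega) h.2
  calc parityConv f ε m
      ≤ ∑ p ∈ (antidiagonal m).filter (fun p => p.2 % 2 = ε),
          f (shift p).1 * f (shift p).2 :=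
        sum_le_sum fun p _ => Nat.mul_le_mul_right _ (hf (Nat.le_succ p.1))
    _ = ∑ p ∈ ((antidiagonal m).filter (fun p => p.2 % 2 = ε)).image shift, f p.1 * f p.2 :=
        (sum_image (f := fun p => f p.1 * f p.2) fun p _ q _ h => shift_injective h).symm
    _ ≤ parityConv f ε (m + 1) := by
        refine sum_le_sum_of_subset fun p hp => ?_
        simp only [mem_image, mem_filter, HasAntidiagonal.mem_antidiagonal, shift] at hp ⊢
        obtain ⟨q, ⟨hq, hε⟩, rfl⟩ := hp
        exact ⟨by omega, hε⟩

theorem parityConv_mono (hf : Monotone f) : Monotone (parityConv f ε) :=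
  monotone_nat_of_le_succ fun _ => parityConv_le_succ hf

theorem two_mul_parityConv_le_of_odd (hm : Odd m) :
    2 * parityConv f ε m ≤ ∑ p ∈ antidiagonal m, f p.1 * f p.2 := by
  have hm : m % 2 = 1 := Nat.odd_iff.mp hm
  have swap_le : parityConv f ε m ≤
      ∑ p ∈ (antidiagonal m).filter (fun p => ¬p.2 % 2 = ε), f p.1 * f p.2 :=
    calc parityConv f ε m
        = ∑ p ∈ ((antidiagonal m).filter (fun p => p.2 % 2 = ε)).image Prod.swap,
            f p.1 * f p.2 := by
          rw [sum_image fun p _ q _ h => Prod.swap_injective h]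
          exact sum_congr rfl fun p _ => mul_comm _ _
      _ ≤ _ := by
          refine sum_le_sum_of_subset fun p hp => ?_
          simp only [mem_image, mem_filter, HasAntidiagonal.mem_antidiagonal] at hp ⊢
          obtain ⟨q, ⟨hq, hε⟩, rfl⟩ := hp
          simp only [Prod.fst_swap, Prod.snd_swap]
          omega
  rw [two_mul, ← sum_filter_add_sum_filter_not (antidiagonal m) (fun p => p.2 % 2 = ε)]
  exact Nat.add_le_add_left swap_le _

theorem parity_convolution_le_general (g m ε : ℕ) (hg : 1 ≤ g) :
    2 * ∑ p ∈ (Finset.HasAntidiagonal.antidiagonal m).filter (fun p => p.2 % 2 = ε),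
        Nat.choose (p.1 + g - 1) (g - 1) * Nat.choose (p.2 + g - 1) (g - 1) ≤
      Nat.choose (m + 2 * g) (2 * g - 1) := by
  obtain ⟨d, rfl⟩ : ∃ d, g = d + 1 := ⟨g - 1, by omega⟩
  simp only [Nat.add_succ_sub_one, show 2 * (d + 1) - 1 = d + d + 1 by omega]
  let m' := 2 * (m / 2) + 1
  have hm' : m ≤ m' ∧ m' ≤ m + 1 := by omega
  have hf : Monotone fun i => (i + d).choose d :=
    fun i j hij => Nat.choose_le_choose d (Nat.add_le_add_right hij d)
  calc 2 * parityConv (fun i => (i + d).choose d) ε m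
      ≤ 2 * parityConv (fun i => (i + d).choose d) ε m' :=
        Nat.mul_le_mul_left 2 (parityConv_mono hf hm'.1)
    _ ≤ ∑ p ∈ antidiagonal m', (p.1 + d).choose d * (p.2 + d).choose d :=
        two_mul_parityConv_le_of_odd (odd_two_mul_add_one _)
    _ = (m' + (d + d + 1)).choose (d + d + 1) :=
        Nat.sum_antidiagonal_add_choose_mul_add_choose d d m'
    _ ≤ (m + 2 * (d + 1)).choose (d + d + 1) := Nat.choose_le_choose _ (by omega)

/-- For `g ≥ 1`, any `m`, and parity `ε ∈ {0,1}`,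
`2·∑_{i+j=m, j ≡ ε (mod 2)} C(i+g−1, g−1)·C(j+g−1, g−1) ≤ C(m+2g, 2g−1)`. -/
theorem parity_convolution_le (g m ε : ℕ) (hg : 1 ≤ g) (hε : ε = 0 ∨ ε = 1) :
    2 * ∑ p ∈ (Finset.HasAntidiagonal.antidiagonal m).filter (fun p => p.2 % 2 = ε),
        Nat.choose (p.1 + g - 1) (g - 1) * Nat.choose (p.2 + g - 1) (g - 1) ≤
      Nat.choose (m + 2 * g) (2 * g - 1) :=
  parity_convolution_le_general g m ε hg
end
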